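/- Let ν, δ, κ, α > 0, let N be a positive integer with N² ≥ 2να²/κ, let l be an integer with |l| > N, and let t ≥ 0. Then e^{−(Re ρ_l) t} · N⁴ / |ρ_l| ≤ (2α⁴/κ) · e^{−(κ/(2α⁴)) N⁴ t}. (This is the bound on |e^{−ρ_l t} / (ρ_l/N⁴)| used to prove the exponential estimate ‖P_N F_NR(t/ε, U(t))‖ ≤ C₂ e^{−c₁N⁴t} of Lemma 3.1.) -/

import Mathlib

/-- The eigenvalue (symbol) `ρ_k = -ν (k/α)² - i δ (k/α)³ + κ (k/α)⁴` of the linear part of the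
generalized Kuramoto–Sivashinsky equation acting on the Fourier mode `e^{i(k/α)x}`. -/
noncomputable def gksEig (ν δ κ α : ℝ) (k : ℤ) : ℂ :=
  -(ν : ℂ) * ((k : ℂ) / (α : ℂ)) ^ 2 - Complex.I * (δ : ℂ) * ((k : ℂ) / (α : ℂ)) ^ 3
    + (κ : ℂ) * ((k : ℂ) / (α : ℂ)) ^ 4

/-!
For `|l| > N` the quartic term dominates: the hypothesis `N² ≥ 2να²/κ` gives
`ν (l/α)² ≤ κ (l/α)⁴ / 2`, so `Re ρ_l ≥ κ (l/α)⁴ / 2 ≥ (κ/(2α⁴)) N⁴`. Since `|ρ_l| ≥ Re ρ_l`, both the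
exponential factor and the quotient `N⁴/|ρ_l|` are controlled by this single lower bound.
-/

theorem gksEig_re (ν δ κ α : ℝ) (k : ℤ) :
    (gksEig ν δ κ α k).re = -ν * ((k : ℝ) / α) ^ 2 + κ * ((k : ℝ) / α) ^ 4 := by
  have hx : (k : ℂ) / (α : ℂ) = (((k : ℝ) / α : ℝ) : ℂ) := by push_cast; ring
  simp only [gksEig, hx, ← Complex.ofReal_pow, Complex.add_re, Complex.sub_re, Complex.mul_re,
    Complex.neg_re, Complex.neg_im, Complex.ofReal_re, Complex.ofReal_im, Complex.I_re,
    Complex.I_im]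
  ring

theorem half_mul_pow_four_le_of_le_sq {ν κ x : ℝ} (hκ : 0 < κ) (hx : 2 * ν / κ ≤ x ^ 2) :
    κ * x ^ 4 / 2 ≤ -ν * x ^ 2 + κ * x ^ 4 := by
  rw [div_le_iff₀ hκ] at hx
  nlinarith [sq_nonneg x]

theorem half_mul_pow_four_le_gksEig_re {ν δ κ α : ℝ} (hκ : 0 < κ) (hα : 0 < α) {M : ℝ} {l : ℤ}
    (hM : 2 * ν * α ^ 2 / κ ≤ M ^ 2) (hMl : M ^ 2 ≤ (l : ℝ) ^ 2) :
    κ * ((l : ℝ) / α) ^ 4 / 2 ≤ (gksEig ν δ κ α l).re := by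
  rw [gksEig_re]
  refine half_mul_pow_four_le_of_le_sq hκ ?_
  rw [div_pow, le_div_iff₀ (by positivity)]
  calc 2 * ν / κ * α ^ 2 = 2 * ν * α ^ 2 / κ := by ring
    _ ≤ (l : ℝ) ^ 2 := hM.trans hMl

theorem div_mul_pow_four_le_gksEig_re {ν δ κ α : ℝ} (hκ : 0 < κ) (hα : 0 < α) {M : ℝ} {l : ℤ}
    (hM : 2 * ν * α ^ 2 / κ ≤ M ^ 2) (hMl : M ^ 2 ≤ (l : ℝ) ^ 2) :
    κ / (2 * α ^ 4) * M ^ 4 ≤ (gksEig ν δ κ α l).re :=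
  calc κ / (2 * α ^ 4) * M ^ 4 = κ / (2 * α ^ 4) * (M ^ 2) ^ 2 := by ring
    _ ≤ κ / (2 * α ^ 4) * ((l : ℝ) ^ 2) ^ 2 :=
      mul_le_mul_of_nonneg_left (pow_le_pow_left₀ (by positivity) hMl 2) (by positivity)
    _ = κ * ((l : ℝ) / α) ^ 4 / 2 := by field_simp
    _ ≤ (gksEig ν δ κ α l).re := half_mul_pow_four_le_gksEig_re hκ hα hM hMl

theorem exp_neg_re_mul_div_norm_le {z : ℂ} {a M t : ℝ} (ha : 0 < a) (hM : 0 ≤ M) (ht : 0 ≤ t)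
    (hre_pos : 0 < z.re) (hre : a * M ≤ z.re) :
    Real.exp (-z.re * t) * M / ‖z‖ ≤ a⁻¹ * Real.exp (-a * M * t) := by
  have hnorm : 0 < ‖z‖ := hre_pos.trans_le (Complex.re_le_norm z)
  have hexp : Real.exp (-z.re * t) ≤ Real.exp (-a * M * t) := by
    rw [Real.exp_le_exp]
    nlinarith
  have hquot : M / ‖z‖ ≤ a⁻¹ := by
    rw [div_le_iff₀ hnorm, inv_mul_eq_div, le_div_iff₀ ha, mul_comm]
    exact hre.trans (Complex.re_le_norm z)
  rw [mul_div_assoc, mul_comm a⁻¹]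
  exact mul_le_mul hexp hquot (by positivity) (by positivity)

theorem stmt_9_general (ν δ κ α : ℝ) (hκ : 0 < κ) (hα : 0 < α)
    (N : ℕ) (hN2 : (N : ℝ) ^ 2 ≥ 2 * ν * α ^ 2 / κ)
    (l : ℤ) (hl : (N : ℤ) < |l|) (t : ℝ) (ht : 0 ≤ t) :
    Real.exp (-(gksEig ν δ κ α l).re * t) * (N : ℝ) ^ 4 / ‖gksEig ν δ κ α l‖
      ≤ (2 * α ^ 4 / κ) * Real.exp (-(κ / (2 * α ^ 4)) * (N : ℝ) ^ 4 * t) := by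
  have hNl : (N : ℝ) ^ 2 ≤ (l : ℝ) ^ 2 := by
    rw [← sq_abs (l : ℝ), sq_le_sq₀ (by positivity) (abs_nonneg _)]
    exact_mod_cast hl.le
  have hl0 : (l : ℝ) ≠ 0 := Int.cast_ne_zero.mpr (abs_pos.mp (hl.trans_le' (by positivity)))
  have hre_pos : 0 < (gksEig ν δ κ α l).re :=
    lt_of_lt_of_le (by positivity) (half_mul_pow_four_le_gksEig_re (δ := δ) hκ hα hN2 hNl)
  have hbound := exp_neg_re_mul_div_norm_le (by positivity) (by positivity) ht hre_pos
    (div_mul_pow_four_le_gksEig_re hκ hα hN2 hNl)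
  rwa [inv_div] at hbound

/-- The bound `e^{−(Re ρ_l)t}·N⁴/|ρ_l| ≤ (2α⁴/κ)·e^{−(κ/(2α⁴))N⁴ t}` for `|l| > N`,
`N² ≥ 2να²/κ` and `t ≥ 0`, used in the proof of Lemma 3.1. -/
theorem stmt_9 (ν δ κ α : ℝ) (hν : 0 < ν) (hδ : 0 < δ) (hκ : 0 < κ) (hα : 0 < α)
    (N : ℕ) (hN : 0 < N) (hN2 : (N : ℝ) ^ 2 ≥ 2 * ν * α ^ 2 / κ)
    (l : ℤ) (hl : (N : ℤ) < |l|) (t : ℝ) (ht : 0 ≤ t) :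
    Real.exp (-(gksEig ν δ κ α l).re * t) * (N : ℝ) ^ 4 / ‖gksEig ν δ κ α l‖
      ≤ (2 * α ^ 4 / κ) * Real.exp (-(κ / (2 * α ^ 4)) * (N : ℝ) ^ 4 * t) :=
  stmt_9_general ν δ κ α hκ hα N hN2 l hl t ht
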